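/- arXiv:2010.14321 — 6 statements merged into one kernel-verified Lean document; each statement's English description precedes it below -/
import Mathlib

section
/- Let R > 0 be a real number and let m ≥ 2 be a natural number. Then for every natural number n, 2^m · P_R((n+2)m) − (R(R+1)·2^{m−1}·P_R(m) − R²·2^{m−2}·P_R(m−2)) · P_R((n+1)m) + (−1)^m · R^m · P_R(nm) = 0. -/
/-!
The numbers `P_R(n)` form a Lucas sequence with roots `λ, μ`, so for fixed `m` the subsequence
`n ↦ P_R(nm)` is the Lucas-type sequence with roots `λᵐ, μᵐ` and satisfies
`x_{n+2} = (λᵐ + μᵐ) x_{n+1} − (λμ)ᵐ x_n`. Multiplying by `2ᵐ` turns `(λμ)ᵐ` into `(−R)ᵐ`, and the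
middle coefficient `2ᵐ(λᵐ + μᵐ)` is rewritten through `P_R(m)` and `P_R(m − 2)` using
`λ² = Rλ + R/2` and `μ² = Rμ + R/2`.
-/

/-- Generalized Pell numbers `P_R(n) = (2/(R·W))·(λⁿ − μⁿ)` with `W = √(R²+2R)`,
`λ = (R+W)/2`, `μ = (R−W)/2`. -/
noncomputable def PR (R : ℝ) (n : ℕ) : ℝ :=
  (2 / (R * Real.sqrt (R ^ 2 + 2 * R))) *
    (((R + Real.sqrt (R ^ 2 + 2 * R)) / 2) ^ n - ((R - Real.sqrt (R ^ 2 + 2 * R)) / 2) ^ n)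

theorem mul_pow_sub_pow_add_two {A : Type*} [CommRing A] (c a b : A) (n : ℕ) :
    c * (a ^ (n + 2) - b ^ (n + 2)) =
      (a + b) * (c * (a ^ (n + 1) - b ^ (n + 1))) - a * b * (c * (a ^ n - b ^ n)) := by
  ring

theorem sub_mul_pow_add_pow_of_vieta {A : Type*} [CommRing A] {l u R : A} (hsum : l + u = R)
    (hprod : 2 * (l * u) = -R) (k : ℕ) :
    2 * (R + 1) * (l ^ (k + 2) - u ^ (k + 2)) - R * (l ^ k - u ^ k) =
      2 * (l - u) * (l ^ (k + 2) + u ^ (k + 2)) := by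
  subst hsum
  linear_combination (l ^ k * (2 * l - 1) - u ^ k * (2 * u - 1)) * hprod

namespace PR

noncomputable def disc (R : ℝ) : ℝ := Real.sqrt (R ^ 2 + 2 * R)

noncomputable def lam (R : ℝ) : ℝ := (R + disc R) / 2

noncomputable def mu (R : ℝ) : ℝ := (R - disc R) / 2

variable {R : ℝ}

theorem eq_lam_mu (n : ℕ) : PR R n = 2 / (R * disc R) * (lam R ^ n - mu R ^ n) := rfl

theorem disc_pos (hR : 0 < R) : 0 < disc R := Real.sqrt_pos.mpr (by positivity)

theorem lam_add_mu (R : ℝ) : lam R + mu R = R := by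
  unfold lam mu; ring

theorem lam_sub_mu (R : ℝ) : lam R - mu R = disc R := by
  unfold lam mu; ring

theorem two_mul_lam_mul_mu (hR : 0 ≤ R) : 2 * (lam R * mu R) = -R := by
  have hdisc : disc R ^ 2 = R ^ 2 + 2 * R := Real.sq_sqrt (by positivity)
  unfold lam mu
  linear_combination -hdisc / 2

theorem mul_eq_pow_pow (m n : ℕ) :
    PR R (n * m) = 2 / (R * disc R) * ((lam R ^ m) ^ n - (mu R ^ m) ^ n) := by
  rw [eq_lam_mu, ← pow_mul', ← pow_mul']

theorem neg_one_pow_mul_pow (hR : 0 ≤ R) (m : ℕ) :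
    (-1 : ℝ) ^ m * R ^ m = 2 ^ m * (lam R ^ m * mu R ^ m) := by
  rw [← mul_pow, ← mul_pow, ← mul_pow, two_mul_lam_mul_mu hR, neg_one_mul]

theorem subsequence_coeff_eq (hR : 0 < R) (k : ℕ) :
    R * (R + 1) * 2 ^ (k + 1) * PR R (k + 2) - R ^ 2 * 2 ^ k * PR R k =
      2 ^ (k + 2) * (lam R ^ (k + 2) + mu R ^ (k + 2)) := by
  have hdisc := (disc_pos hR).ne'
  have key := sub_mul_pow_add_pow_of_vieta (lam_add_mu R) (two_mul_lam_mul_mu hR.le) k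
  rw [lam_sub_mu] at key
  rw [eq_lam_mu, eq_lam_mu]
  field_simp
  linear_combination 2 ^ (k + 1) * key

end PR

/-- Three-term recurrence for the subsequence `P_R(mn)`:
`2^m·P_R((n+2)m) − (R(R+1)·2^{m−1}·P_R(m) − R²·2^{m−2}·P_R(m−2))·P_R((n+1)m)
  + (−1)^m·R^m·P_R(nm) = 0`. -/
theorem PR_subsequence_recurrence (R : ℝ) (hR : 0 < R) (m : ℕ) (hm : 2 ≤ m) (n : ℕ) :
    2 ^ m * PR R ((n + 2) * m) -
      (R * (R + 1) * 2 ^ (m - 1) * PR R m - R ^ 2 * 2 ^ (m - 2) * PR R (m - 2)) *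
        PR R ((n + 1) * m) +
      (-1 : ℝ) ^ m * R ^ m * PR R (n * m) = 0 := by
  obtain ⟨k, rfl⟩ : ∃ k, m = k + 2 := ⟨m - 2, by omega⟩
  rw [show k + 2 - 1 = k + 1 from rfl, Nat.add_sub_cancel, PR.subsequence_coeff_eq hR,
    PR.neg_one_pow_mul_pow hR.le, PR.mul_eq_pow_pow, PR.mul_eq_pow_pow, PR.mul_eq_pow_pow]
  linear_combination 2 ^ (k + 2) *
    mul_pow_sub_pow_add_two (2 / (R * PR.disc R)) (PR.lam R ^ (k + 2)) (PR.mu R ^ (k + 2)) n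
end

section
/- Let R > 0 be a real number and let m ≥ 2 be a natural number. In ℝ⟦z⟧, the generating function F_m(z) = ∑_{n≥0} P_R(mn)·zⁿ satisfies (2^m − z·(R(R+1)·2^{m−1}·P_R(m) − R²·2^{m−2}·P_R(m−2)) + (−1)^m·R^m·z²) · F_m(z) = 2^m·P_R(m)·z. -/
namespace PowerSeries

variable {S : Type*} [CommRing S]

theorem quadratic_mul_mk_of_recurrence (c₀ c₁ c₂ : S) (a : ℕ → S)
    (h : ∀ n, c₀ * a (n + 2) - c₁ * a (n + 1) + c₂ * a n = 0) :
    (C c₀ - C c₁ * X + C c₂ * X ^ 2) * mk a = C (c₀ * a 0) + C (c₀ * a 1 - c₁ * a 0) * X := by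
  ext n
  rw [show (C c₀ - C c₁ * X + C c₂ * X ^ 2) * mk a
      = C c₀ * mk a - C c₁ * (X ^ 1 * mk a) + C c₂ * (X ^ 2 * mk a) by ring]
  rcases n with _ | _ | n
  · simp
  · simp [coeff_X_pow_mul']
  · simpa [coeff_X_pow_mul', coeff_X] using h n

end PowerSeries

theorem binet_recurrence {S : Type*} [CommRing S] (c α β : S) (n : ℕ) :
    c * (α ^ (n + 2) - β ^ (n + 2)) =
      (α + β) * (c * (α ^ (n + 1) - β ^ (n + 1))) - α * β * (c * (α ^ n - β ^ n)) := by
  ring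

noncomputable def pellLambda (R : ℝ) : ℝ := (R + √(R ^ 2 + 2 * R)) / 2

noncomputable def pellMu (R : ℝ) : ℝ := (R - √(R ^ 2 + 2 * R)) / 2

section GeneralizedPell

variable {R : ℝ}

theorem PR_eq (n : ℕ) :
    PR R n = 2 / (R * √(R ^ 2 + 2 * R)) * (pellLambda R ^ n - pellMu R ^ n) := rfl

theorem pellLambda_mul_pellMu (hR : 0 ≤ R) : pellLambda R * pellMu R = -R / 2 := by
  have := Real.sq_sqrt (by positivity : 0 ≤ R ^ 2 + 2 * R)
  unfold pellLambda pellMu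
  linear_combination (-1 / 4 : ℝ) * this

theorem pellLambda_sq (hR : 0 ≤ R) : 2 * (R + 1 - √(R ^ 2 + 2 * R)) * pellLambda R ^ 2 = R := by
  have := Real.sq_sqrt (by positivity : 0 ≤ R ^ 2 + 2 * R)
  unfold pellLambda
  linear_combination (1 / 2 - R / 2 - √(R ^ 2 + 2 * R) / 2) * this

theorem pellMu_sq (hR : 0 ≤ R) : 2 * (R + 1 + √(R ^ 2 + 2 * R)) * pellMu R ^ 2 = R := by
  have := Real.sq_sqrt (by positivity : 0 ≤ R ^ 2 + 2 * R)
  unfold pellMu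
  linear_combination (1 / 2 - R / 2 + √(R ^ 2 + 2 * R) / 2) * this

theorem two_pow_mul_pellLambda_pow_mul_pellMu_pow (hR : 0 ≤ R) (m : ℕ) :
    2 ^ m * (pellLambda R ^ m * pellMu R ^ m) = (-1) ^ m * R ^ m := by
  rw [← mul_pow, ← mul_pow, pellLambda_mul_pellMu hR, ← mul_pow]
  ring_nf

theorem PR_lucas (hR : 0 < R) (m : ℕ) :
    R * (R + 1) * 2 ^ (m + 1) * PR R (m + 2) - R ^ 2 * 2 ^ m * PR R m =
      2 ^ (m + 2) * (pellLambda R ^ (m + 2) + pellMu R ^ (m + 2)) := by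
  have hW : 0 < √(R ^ 2 + 2 * R) := Real.sqrt_pos.mpr (by positivity)
  have hlam := pellLambda_sq hR.le
  have hmu := pellMu_sq hR.le
  rw [PR_eq, PR_eq]
  set W := √(R ^ 2 + 2 * R) -- otherwise `field_simp` rewrites `√(R ^ 2 + 2 * R)` to `√(R * (R + 2))`
  field_simp
  linear_combination (2 ^ (m + 1) * pellLambda R ^ m) * hlam - (2 ^ (m + 1) * pellMu R ^ m) * hmu

end GeneralizedPell

open PowerSeries in
/-- The generating function `F_m(z) = ∑_{n≥0} P_R(mn)·zⁿ` satisfies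
`(2^m − z·(R(R+1)·2^{m−1}·P_R(m) − R²·2^{m−2}·P_R(m−2)) + (−1)^m·R^m·z²)·F_m(z)
  = 2^m·P_R(m)·z` in `ℝ⟦z⟧`. -/
theorem PR_subsequence_generating_function (R : ℝ) (hR : 0 < R) (m : ℕ) (hm : 2 ≤ m) :
    (C (R := ℝ) (2 ^ m) -
        C (R := ℝ) (R * (R + 1) * 2 ^ (m - 1) * PR R m - R ^ 2 * 2 ^ (m - 2) * PR R (m - 2)) * X +
        C (R := ℝ) ((-1 : ℝ) ^ m * R ^ m) * X ^ 2) * PowerSeries.mk (fun n => PR R (m * n)) =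
      C (R := ℝ) (2 ^ m * PR R m) * X := by
  obtain ⟨k, rfl⟩ : ∃ k, m = k + 2 := ⟨m - 2, by omega⟩
  rw [show k + 2 - 1 = k + 1 by omega, Nat.add_sub_cancel, PR_lucas hR,
    ← two_pow_mul_pellLambda_pow_mul_pellMu_pow hR.le]
  have hrec : ∀ n, 2 ^ (k + 2) * PR R ((k + 2) * (n + 2)) -
      2 ^ (k + 2) * (pellLambda R ^ (k + 2) + pellMu R ^ (k + 2)) * PR R ((k + 2) * (n + 1)) +
      2 ^ (k + 2) * (pellLambda R ^ (k + 2) * pellMu R ^ (k + 2)) * PR R ((k + 2) * n) = 0 := by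
    intro n
    simp only [PR_eq, pow_mul]
    linear_combination (2 : ℝ) ^ (k + 2) * binet_recurrence (2 / (R * √(R ^ 2 + 2 * R)))
      (pellLambda R ^ (k + 2)) (pellMu R ^ (k + 2)) n
  rw [quadratic_mul_mk_of_recurrence _ _ _ _ hrec]
  simp [PR_eq]
end

section
/- Let R > 0 be a real number and m, n natural numbers. Then P_R(n)^{2m+1} = (2^{2m} / (R^{3m}·(R+2)^m)) · ∑_{j=0}^{m} (−1)^j · C(2m+1, j) · P_R((2m+1−2j)·n) · (−R/2)^{jn}, where C(2m+1, j) denotes the binomial coefficient. -/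
/-!
`P_R(n) = c (λⁿ − μⁿ)` with `c = 2/(RW)`. Expanding `(λⁿ − μⁿ)^{2m+1}` binomially
and pairing the terms of index `j` and `2m+1−j` gives
`(a − b)^{2m+1} = ∑_{j ≤ m} (−1)^j C(2m+1, j) (a^{2m+1−2j} − b^{2m+1−2j}) (ab)^j`,
in which each bracket is again a Pell number up to the factor `c`. What remains is
`λμ = −R/2` and `c^{2m} = 2^{2m}/(R^{3m}(R+2)^m)`, both consequences of `W² = R(R+2)`.
-/

open Finset

theorem Finset.sum_range_two_mul_add_two_eq_sum_pairs {M : Type*} [AddCommMonoid M]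
    (f : ℕ → M) (m : ℕ) :
    ∑ i ∈ range (2 * m + 2), f i = ∑ j ∈ range (m + 1), (f j + f (2 * m + 1 - j)) := by
  rw [show 2 * m + 2 = (m + 1) + (m + 1) by omega, sum_range_add, sum_add_distrib,
    ← sum_range_reflect (fun j => f (m + 1 + j))]
  congr 1
  refine sum_congr rfl fun j hj => ?_
  have : j < m + 1 := mem_range.mp hj
  congr 1
  omega

theorem sub_pow_odd_eq_sum {A : Type*} [CommRing A] (a b : A) (m : ℕ) :
    (a - b) ^ (2 * m + 1) = ∑ j ∈ range (m + 1),
      (-1) ^ j * ((2 * m + 1).choose j : A) * (a ^ (2 * m + 1 - 2 * j) - b ^ (2 * m + 1 - 2 * j)) *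
        (a * b) ^ j := by
  rw [sub_eq_add_neg, add_comm, add_pow, sum_range_two_mul_add_two_eq_sum_pairs]
  refine sum_congr rfl fun j hj => ?_
  have hj : j ≤ m := Nat.lt_succ_iff.mp (mem_range.mp hj)
  obtain ⟨k, hk⟩ : ∃ k, 2 * m + 1 - 2 * j = k := ⟨_, rfl⟩
  have hsucc : 2 * m + 1 - j = k + j := by omega
  have hsign : (-1 : A) ^ (k + j) = -(-1) ^ j := by
    rw [pow_add, (show Odd k from ⟨m - j, by omega⟩).neg_one_pow, neg_one_mul]
  rw [hk, hsucc, show 2 * m + 1 - (k + j) = j by omega,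
    Nat.choose_symm_of_eq_add (show 2 * m + 1 = (k + j) + j by omega), neg_pow, neg_pow b, hsign]
  ring

theorem pow_odd_eq_sum_of_binet {A : Type*} [CommRing A] {s : ℕ → A} {c x y : A}
    (hs : ∀ k, s k = c * (x ^ k - y ^ k)) (m n : ℕ) :
    s n ^ (2 * m + 1) = c ^ (2 * m) * ∑ j ∈ range (m + 1),
      (-1) ^ j * ((2 * m + 1).choose j : A) * s ((2 * m + 1 - 2 * j) * n) * (x * y) ^ (j * n) := by
  rw [hs, mul_pow, sub_pow_odd_eq_sum, pow_succ, mul_assoc]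
  congr 1
  rw [mul_sum]
  refine sum_congr rfl fun j _ => ?_
  rw [hs]
  ring

section Pell

variable {R : ℝ}

theorem sqrt_sq_add_two_mul_sq (hdisc : 0 ≤ R ^ 2 + 2 * R) :
    Real.sqrt (R ^ 2 + 2 * R) ^ 2 = R * (R + 2) := by
  rw [Real.sq_sqrt hdisc]
  ring

theorem pell_roots_mul (hdisc : 0 ≤ R ^ 2 + 2 * R) :
    (R + Real.sqrt (R ^ 2 + 2 * R)) / 2 * ((R - Real.sqrt (R ^ 2 + 2 * R)) / 2) = -R / 2 := by
  linear_combination (-1 / 4 : ℝ) * sqrt_sq_add_two_mul_sq hdisc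

theorem pell_coeff_pow_two_mul (hdisc : 0 ≤ R ^ 2 + 2 * R) (m : ℕ) :
    (2 / (R * Real.sqrt (R ^ 2 + 2 * R))) ^ (2 * m) =
      2 ^ (2 * m) / (R ^ (3 * m) * (R + 2) ^ m) := by
  rw [div_pow, mul_pow, pow_mul (Real.sqrt _), sqrt_sq_add_two_mul_sq hdisc, mul_pow R]
  ring

end Pell

/-- Linearization of odd powers:
`P_R(n)^{2m+1} = (2^{2m}/(R^{3m}(R+2)^m)) · ∑_{j=0}^m (−1)^j·C(2m+1,j)·P_R((2m+1−2j)n)·(−R/2)^{jn}`. -/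
theorem PR_odd_power_linearization (R : ℝ) (hR : 0 < R) (m n : ℕ) :
    PR R n ^ (2 * m + 1) =
      2 ^ (2 * m) / (R ^ (3 * m) * (R + 2) ^ m) *
        ∑ j ∈ Finset.range (m + 1),
          (-1 : ℝ) ^ j * (Nat.choose (2 * m + 1) j : ℝ) * PR R ((2 * m + 1 - 2 * j) * n) *
            (-R / 2) ^ (j * n) := by
  have hdisc : 0 ≤ R ^ 2 + 2 * R := by positivity
  rw [← pell_coeff_pow_two_mul hdisc, ← pell_roots_mul hdisc]
  exact pow_odd_eq_sum_of_binet (fun _ => rfl) m n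
end

section
/- Let R > 0 be a real number, m ≥ 1 and n natural numbers. Then P_R(n)^{2m} = (2^{2m+1}/(R^{3m}(R+2)^m)) · ∑_{j=0}^{m−1} (−1)^j·C(2m, j)·(P_R(2(m−j)(n+1))/P_R(2(m−j)))·(−R/2)^{jn} − (2^{2m−1}/(R^{3m−1}(R+2)^m)) · ∑_{j=0}^{m−1} (−1)^j·C(2m, j)·(P_R(2(m−j)n)·Q_R(2(m−j))/P_R(2(m−j)))·(−R/2)^{jn} + (−1)^m·C(2m, m)·(2^{2m}/(R^{3m}(R+2)^m))·(−R/2)^{mn}, where C(2m, j) denotes the binomial coefficient. (For R > 0 the denominators P_R(2(m−j)) are nonzero.) -/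
/-- Companion sequence `Q_R(n) = (2/R)·(λⁿ + μⁿ)`. -/
noncomputable def QR (R : ℝ) (n : ℕ) : ℝ :=
  (2 / R) * (((R + Real.sqrt (R ^ 2 + 2 * R)) / 2) ^ n + ((R - Real.sqrt (R ^ 2 + 2 * R)) / 2) ^ n)

open Finset

theorem Finset.sum_range_two_mul_add_one_eq {M : Type*} [AddCommMonoid M] (f : ℕ → M) (m : ℕ) :
    ∑ k ∈ range (2 * m + 1), f k = ∑ j ∈ range m, (f j + f (2 * m - j)) + f m := by
  have hreflect : ∑ j ∈ range m, f (m + 1 + j) = ∑ j ∈ range m, f (2 * m - j) := by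
    rw [← sum_range_reflect (fun j ↦ f (2 * m - j)) m]
    refine sum_congr rfl fun j hj ↦ congrArg f ?_
    have := mem_range.mp hj
    omega
  rw [show 2 * m + 1 = m + 1 + m by ring, sum_range_add, sum_range_succ, hreflect,
    sum_add_distrib]
  abel

theorem sub_pow_two_mul_eq_sum {A : Type*} [CommRing A] (x y : A) (m : ℕ) :
    (x - y) ^ (2 * m) = ∑ j ∈ range m,
        (-1) ^ j * ((2 * m).choose j : A) * (x * y) ^ j * (x ^ (2 * (m - j)) + y ^ (2 * (m - j))) +
      (-1) ^ m * ((2 * m).choose m : A) * (x * y) ^ m := by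
  rw [sub_pow, sum_range_two_mul_add_one_eq]
  congr 1
  · refine sum_congr rfl fun j hj ↦ ?_
    have hj : j < m := mem_range.mp hj
    rw [Nat.choose_symm (by omega), show 2 * m - (2 * m - j) = j by omega,
      show 2 * m - j = j + 2 * (m - j) by omega]
    simp only [pow_add, pow_mul, neg_one_sq, one_pow, mul_one]
    ring
  · rw [show 2 * m - m = m by omega, pow_add, pow_mul, neg_one_sq, one_pow]
    ring

namespace PR

noncomputable def rootPos (R : ℝ) : ℝ := (R + √(R ^ 2 + 2 * R)) / 2

noncomputable def rootNeg (R : ℝ) : ℝ := (R - √(R ^ 2 + 2 * R)) / 2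

noncomputable def scale (R : ℝ) : ℝ := 2 / (R * √(R ^ 2 + 2 * R))

theorem eq_scale_mul (R : ℝ) (n : ℕ) : PR R n = scale R * (rootPos R ^ n - rootNeg R ^ n) := rfl

theorem rootPos_mul_rootNeg {R : ℝ} (hR : 0 ≤ R ^ 2 + 2 * R) : rootPos R * rootNeg R = -R / 2 := by
  have hsq := Real.sq_sqrt hR
  unfold rootPos rootNeg
  linear_combination -hsq / 4

theorem abs_rootNeg_lt_rootPos {R : ℝ} (hR : 0 < R) : |rootNeg R| < rootPos R := by
  have hW : 0 < √(R ^ 2 + 2 * R) := Real.sqrt_pos.mpr (by positivity)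
  unfold rootPos rootNeg
  rw [abs_div, abs_two, div_lt_div_iff_of_pos_right two_pos, abs_sub_lt_iff]
  constructor <;> linarith

theorem pos {R : ℝ} (hR : 0 < R) {k : ℕ} (hk : k ≠ 0) : 0 < PR R k := by
  have hW : 0 < √(R ^ 2 + 2 * R) := Real.sqrt_pos.mpr (by positivity)
  have hpow : rootNeg R ^ k < rootPos R ^ k :=
    calc rootNeg R ^ k ≤ |rootNeg R| ^ k := by rw [← abs_pow]; exact le_abs_self _
      _ < rootPos R ^ k := pow_lt_pow_left₀ (abs_rootNeg_lt_rootPos hR) (abs_nonneg _) hk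
  rw [eq_scale_mul]
  exact mul_pos (by unfold scale; positivity) (sub_pos.mpr hpow)

theorem scale_pow_two_mul {R : ℝ} (hR : 0 ≤ R ^ 2 + 2 * R) (m : ℕ) :
    scale R ^ (2 * m) = 2 ^ (2 * m) / (R ^ (3 * m) * (R + 2) ^ m) := by
  have hW : √(R ^ 2 + 2 * R) ^ 2 = R * (R + 2) := by rw [Real.sq_sqrt hR]; ring
  rw [scale, pow_mul, div_pow, mul_pow, hW, show R ^ 2 * (R * (R + 2)) = R ^ 3 * (R + 2) by ring,
    div_pow, mul_pow, ← pow_mul, ← pow_mul]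

theorem two_mul_scale_pow_two_mul {R : ℝ} (hR : 0 ≤ R ^ 2 + 2 * R) (m : ℕ) :
    2 * scale R ^ (2 * m) = 2 ^ (2 * m + 1) / (R ^ (3 * m) * (R + 2) ^ m) := by
  rw [scale_pow_two_mul hR, pow_succ]
  ring

theorem half_mul_scale_pow_two_mul {R : ℝ} (hR : 0 < R) {m : ℕ} (hm : m ≠ 0) :
    R / 2 * scale R ^ (2 * m) = 2 ^ (2 * m - 1) / (R ^ (3 * m - 1) * (R + 2) ^ m) := by
  obtain ⟨k, rfl⟩ := Nat.exists_eq_succ_of_ne_zero hm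
  rw [scale_pow_two_mul (by positivity), show 2 * (k + 1) = 2 * k + 1 + 1 by ring,
    show 3 * (k + 1) = 3 * k + 2 + 1 by ring, Nat.add_sub_cancel, Nat.add_sub_cancel]
  field_simp
  ring

theorem half_mul_QR {R : ℝ} (hR : R ≠ 0) (s : ℕ) :
    R / 2 * QR R s = rootPos R ^ s + rootNeg R ^ s := by
  rw [QR, ← mul_assoc, div_mul_div_comm, mul_comm R 2, div_self (by positivity), one_mul]; rfl

theorem two_mul_PR_mul_succ_div_sub {R : ℝ} {s : ℕ} (hs : PR R s ≠ 0) (n : ℕ) :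
    2 * (PR R (s * (n + 1)) / PR R s) - R / 2 * (PR R (s * n) * QR R s / PR R s) =
      (rootPos R ^ n) ^ s + (rootNeg R ^ n) ^ s := by
  rw [← pow_mul, ← pow_mul, mul_comm n s]
  have hR : R ≠ 0 := by rintro rfl; simp [PR] at hs
  calc _ = (2 * PR R (s * (n + 1)) - R / 2 * QR R s * PR R (s * n)) / PR R s := by ring
    _ = _ := by
      rw [div_eq_iff hs, half_mul_QR hR, eq_scale_mul, eq_scale_mul, eq_scale_mul]
      simp only [pow_mul]
      ring

end PR

/-- Linearization of even powers of generalized Pell numbers. -/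
theorem PR_even_power_linearization (R : ℝ) (hR : 0 < R) (m : ℕ) (hm : 1 ≤ m) (n : ℕ) :
    PR R n ^ (2 * m) =
      2 ^ (2 * m + 1) / (R ^ (3 * m) * (R + 2) ^ m) *
        ∑ j ∈ Finset.range m,
          (-1 : ℝ) ^ j * (Nat.choose (2 * m) j : ℝ) *
            (PR R (2 * (m - j) * (n + 1)) / PR R (2 * (m - j))) * (-R / 2) ^ (j * n) -
      2 ^ (2 * m - 1) / (R ^ (3 * m - 1) * (R + 2) ^ m) *
        ∑ j ∈ Finset.range m,
          (-1 : ℝ) ^ j * (Nat.choose (2 * m) j : ℝ) *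
            (PR R (2 * (m - j) * n) * QR R (2 * (m - j)) / PR R (2 * (m - j))) *
            (-R / 2) ^ (j * n) +
      (-1 : ℝ) ^ m * (Nat.choose (2 * m) m : ℝ) * (2 ^ (2 * m) / (R ^ (3 * m) * (R + 2) ^ m)) *
        (-R / 2) ^ (m * n) := by
  have hdisc : 0 ≤ R ^ 2 + 2 * R := by positivity
  have hroots : PR.rootPos R ^ n * PR.rootNeg R ^ n = (-R / 2) ^ n := by
    rw [← mul_pow, PR.rootPos_mul_rootNeg hdisc]
  rw [PR.eq_scale_mul, mul_pow, sub_pow_two_mul_eq_sum, hroots,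
    ← PR.two_mul_scale_pow_two_mul hdisc, ← PR.half_mul_scale_pow_two_mul hR (by omega),
    ← PR.scale_pow_two_mul hdisc, mul_add, mul_sum, mul_sum, mul_sum, ← sum_sub_distrib]
  congr 1
  · refine sum_congr rfl fun j hj ↦ ?_
    have hPR : PR R (2 * (m - j)) ≠ 0 := (PR.pos hR (by have := mem_range.mp hj; omega)).ne'
    rw [← PR.two_mul_PR_mul_succ_div_sub hPR n, ← pow_mul, mul_comm n j]
    ring
  · rw [← pow_mul, mul_comm n m]
    ring
end

section
/- Let K be a field (e.g. ℝ), x ∈ K with x ≠ 0, and N ≥ 1 a natural number. Then x^{2N} − x^{−2N} = (x + x⁻¹) · ∑_{l=0}^{N−1} C(N+l, N−l−1) · (x − x⁻¹)^{2l+1}, where C(N+l, N−l−1) denotes the binomial coefficient. -/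
/-!
With `s = x - x⁻¹`, the numbers `x` and `-x⁻¹` are the two roots of `t² - s t - 1`, so the
Fibonacci polynomials `F₀ = 0, F₁ = 1, Fₙ₊₂ = s Fₙ₊₁ + Fₙ` satisfy the Binet formula
`(x + x⁻¹) Fₙ(s) = xⁿ - (-x⁻¹)ⁿ`. For `n = 2N` the right-hand side is `x^{2N} - x^{-2N}`, and Pascal's
rule shows that `F_{2N}(s) = ∑_{l<N} C(N+l, 2l+1) s^{2l+1}`, which is the claimed sum since
`C(N+l, 2l+1) = C(N+l, N-l-1)`.
-/

open Finset

def fibPoly {R : Type*} [Semiring R] (s : R) : ℕ → R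
  | 0 => 0
  | 1 => 1
  | n + 2 => s * fibPoly s (n + 1) + fibPoly s n

section Semiring

variable {R : Type*} [Semiring R] (s : R)

@[simp] theorem fibPoly_zero : fibPoly s 0 = 0 := rfl

@[simp] theorem fibPoly_one : fibPoly s 1 = 1 := rfl

theorem fibPoly_add_two (n : ℕ) : fibPoly s (n + 2) = s * fibPoly s (n + 1) + fibPoly s n := rfl

end Semiring

section CommSemiring

variable {R : Type*} [CommSemiring R] (s : R) (N : ℕ)

theorem mul_sum_choose_even_add_sum_choose_odd :
    s * ∑ l ∈ range (N + 1), ((N + l).choose (2 * l) : R) * s ^ (2 * l) +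
        ∑ l ∈ range N, ((N + l).choose (2 * l + 1) : R) * s ^ (2 * l + 1) =
      ∑ l ∈ range (N + 1), ((N + 1 + l).choose (2 * l + 1) : R) * s ^ (2 * l + 1) := by
  have hOddTail : ∑ l ∈ range N, ((N + l).choose (2 * l + 1) : R) * s ^ (2 * l + 1) =
      ∑ l ∈ range (N + 1), ((N + l).choose (2 * l + 1) : R) * s ^ (2 * l + 1) := by
    rw [sum_range_succ _ N, Nat.choose_eq_zero_of_lt (by omega : N + N < 2 * N + 1),
      Nat.cast_zero, zero_mul, add_zero]
  rw [hOddTail, mul_sum, ← sum_add_distrib]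
  refine sum_congr rfl fun l _ => ?_
  rw [add_right_comm, Nat.choose_succ_succ', Nat.cast_add]
  ring

theorem mul_sum_choose_odd_add_sum_choose_even :
    s * ∑ l ∈ range (N + 1), ((N + 1 + l).choose (2 * l + 1) : R) * s ^ (2 * l + 1) +
        ∑ l ∈ range (N + 1), ((N + l).choose (2 * l) : R) * s ^ (2 * l) =
      ∑ l ∈ range (N + 1 + 1), ((N + 1 + l).choose (2 * l) : R) * s ^ (2 * l) := by
  have hPascal : ∀ l, ((N + 1 + (l + 1)).choose (2 * (l + 1)) : R) =
      (N + 1 + l).choose (2 * l + 1) + (N + 1 + l).choose (2 * l + 2) := fun l => by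
    rw [show N + 1 + (l + 1) = N + 1 + l + 1 by ring, show 2 * (l + 1) = 2 * l + 1 + 1 by ring,
      Nat.choose_succ_succ', Nat.cast_add]
  have hShift : ∑ l ∈ range (N + 1), ((N + l).choose (2 * l) : R) * s ^ (2 * l) =
      ∑ l ∈ range (N + 1), ((N + 1 + l).choose (2 * l + 2) : R) * s ^ (2 * l + 2) + 1 := by
    conv_rhs => rw [sum_range_succ, Nat.choose_eq_zero_of_lt (by omega : N + 1 + N < 2 * N + 2),
      Nat.cast_zero, zero_mul, add_zero]
    rw [sum_range_succ']
    simp [add_right_comm N 1, mul_add, ← add_assoc]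
  rw [sum_range_succ' _ (N + 1), hShift, mul_sum, ← add_assoc, ← sum_add_distrib]
  simp only [hPascal, mul_zero, Nat.choose_zero_right, Nat.cast_one, pow_zero, mul_one]
  congr 1
  exact sum_congr rfl fun l _ => by ring

theorem fibPoly_two_mul_and_two_mul_add_one :
    fibPoly s (2 * N) = ∑ l ∈ range N, ((N + l).choose (2 * l + 1) : R) * s ^ (2 * l + 1) ∧
      fibPoly s (2 * N + 1) = ∑ l ∈ range (N + 1), ((N + l).choose (2 * l) : R) * s ^ (2 * l) := by
  induction N with
  | zero => simp
  | succ N ih =>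
    obtain ⟨hEven, hOdd⟩ := ih
    have hEven' : fibPoly s (2 * (N + 1)) =
        ∑ l ∈ range (N + 1), ((N + 1 + l).choose (2 * l + 1) : R) * s ^ (2 * l + 1) := by
      rw [mul_add_one, fibPoly_add_two, hOdd, hEven, mul_sum_choose_even_add_sum_choose_odd]
    refine ⟨hEven', ?_⟩
    rw [show 2 * (N + 1) + 1 = 2 * N + 1 + 2 by ring, fibPoly_add_two,
      show 2 * N + 1 + 1 = 2 * (N + 1) by ring, hEven', hOdd,
      mul_sum_choose_odd_add_sum_choose_even]

end CommSemiring

theorem add_mul_fibPoly_sub {R : Type*} [CommRing R] {x y : R} (hxy : x * y = 1) (n : ℕ) :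
    (x + y) * fibPoly (x - y) n = x ^ n - (-y) ^ n := by
  induction n using Nat.twoStepInduction with
  | zero => simp
  | one => simp
  | more n ih ih' =>
    rw [fibPoly_add_two, mul_add, mul_left_comm, ih, ih']
    linear_combination ((-y) ^ n - x ^ n) * hxy

theorem even_power_difference_identity_general {K : Type*} [Field K] (x : K) (hx : x ≠ 0)
    (N : ℕ) :
    x ^ (2 * N) - x⁻¹ ^ (2 * N) =
      (x + x⁻¹) *
        ∑ l ∈ Finset.range N, (Nat.choose (N + l) (N - l - 1) : K) * (x - x⁻¹) ^ (2 * l + 1) := by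
  calc x ^ (2 * N) - x⁻¹ ^ (2 * N) = x ^ (2 * N) - (-x⁻¹) ^ (2 * N) := by
        rw [(even_two_mul N).neg_pow]
    _ = (x + x⁻¹) * fibPoly (x - x⁻¹) (2 * N) := (add_mul_fibPoly_sub (mul_inv_cancel₀ hx) _).symm
    _ = _ := by
      rw [(fibPoly_two_mul_and_two_mul_add_one _ N).1]
      congr 1
      refine sum_congr rfl fun l hl => ?_
      rw [Nat.choose_symm_of_eq_add (b := N - l - 1) (by rw [mem_range] at hl; omega)]

/-- `x^{2N} − x^{−2N} = (x + x⁻¹) · ∑_{l=0}^{N−1} C(N+l, N−l−1)·(x − x⁻¹)^{2l+1}` in a field. -/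
theorem even_power_difference_identity {K : Type*} [Field K] (x : K) (hx : x ≠ 0)
    (N : ℕ) (hN : 1 ≤ N) :
    x ^ (2 * N) - x⁻¹ ^ (2 * N) =
      (x + x⁻¹) *
        ∑ l ∈ Finset.range N, (Nat.choose (N + l) (N - l - 1) : K) * (x - x⁻¹) ^ (2 * l + 1) :=
  even_power_difference_identity_general x hx N
end

section
/- Let R > 0 be a real number with 3R − 2 ≠ 0. Then for every natural number n, ∑_{k=0}^{n} P_R(k)² = 16(R−2)/(R²(R+2)²(3R−2)) + (4·P_R(2n+2) + 2R(R−1)·P_R(2n))/((R+2)(3R−2)R²) − (8/(R²(R+2)²))·(−R/2)^n. Equivalently, the generating function ∑_{n≥0} (∑_{k=0}^{n} P_R(k)²)·zⁿ equals 16(R−2)/((1−z)R²(R+2)²(3R−2)) + 16(−zR+zR²+2)/((R+2)(3R−2)R²(z²R²−4zR(R+1)+4)) − 16/((zR+2)R²(R+2)²). -/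
/-!
Write `P_R(n) = c (λⁿ - μⁿ)` with `λ + μ = R`, `λμ = -R/2`. The even terms `u n = P_R(2n)` have
characteristic roots `λ², μ²`, so `4 u (n+2) = 4R(R+1) u (n+1) - R² u n`, and squaring the Binet
form expresses `P_R(n+1)²` through `u (n+1)`, `u n` and `(λμ)ⁿ = (-R/2)ⁿ`. The closed form then
follows by induction. Its three summands (a constant, a combination of `u (n+1)` and `u n`, and a
geometric sequence) satisfy linear recurrences of orders 1, 2 and 1, which turns each of them into
one of the three rational functions of the generating-function form.
-/

open Finset PowerSeries

namespace PowerSeries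

variable {A : Type*} [CommRing A]

theorem mk_mul_eq_of_recurrence_one {u : ℕ → A} {a b : A}
    (h : ∀ n, a * u (n + 1) + b * u n = 0) :
    mk u * (C a + C b * X) = C (a * u 0) := by
  rw [show mk u * (C a + C b * X) = C a * mk u + C b * (mk u * X) by ring]
  ext n
  rcases n with _ | n
  · simp
  · simp [h n]

theorem mk_mul_eq_of_recurrence_two {u : ℕ → A} {a b c : A}
    (h : ∀ n, a * u (n + 2) + b * u (n + 1) + c * u n = 0) :
    mk u * (C a + C b * X + C c * X ^ 2) = C (a * u 0) + C (a * u 1 + b * u 0) * X := by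
  rw [show mk u * (C a + C b * X + C c * X ^ 2) =
    C a * mk u + C b * (mk u * X) + C c * (mk u * X ^ 2) by ring]
  ext n
  rcases n with _ | _ | n
  · simp
  · simp [coeff_mul_X_pow']
  · simp [coeff_mul_X_pow', h n]

variable {k : Type*} [Field k]

theorem mk_const_div {a d : k} (hd : d ≠ 0) :
    mk (fun _ => a / d) = C a * ((1 - X) * C d)⁻¹ := by
  rw [eq_mul_inv_iff_mul_eq (by simp [hd]),
    show (1 - X) * C d = (C 1 + C (-1) * X) * C d by simp [sub_eq_add_neg], ← mul_assoc,
    mk_mul_eq_of_recurrence_one (by simp), ← map_mul]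
  congr 1
  field_simp

theorem mk_div_mul_neg_div_two_pow [CharZero k] {R d : k} (hd : d ≠ 0) :
    mk (fun n => 8 / d * (-R / 2) ^ n) = C 16 * ((X * C R + 2) * C d)⁻¹ := by
  rw [eq_mul_inv_iff_mul_eq (by simp [hd, ← map_ofNat C]),
    show X * C R + 2 = C 2 + C R * X by rw [map_ofNat]; ring, ← mul_assoc,
    mk_mul_eq_of_recurrence_one (fun n => by ring), ← map_mul]
  congr 1
  field_simp
  norm_num

end PowerSeries

def binet {K : Type*} [CommRing K] (c x y : K) (n : ℕ) : K := c * (x ^ n - y ^ n)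

section Binet

variable {K : Type*} [CommRing K] (c x y : K)

@[simp]
theorem binet_zero : binet c x y 0 = 0 := by simp [binet]

theorem binet_add_four (k : ℕ) :
    binet c x y (k + 4) = (x ^ 2 + y ^ 2) * binet c x y (k + 2) - (x * y) ^ 2 * binet c x y k := by
  simp only [binet]; ring

theorem sq_sub_sq_mul_binet_succ_sq (n : ℕ) :
    (x ^ 2 - y ^ 2) * binet c x y (n + 1) ^ 2 =
      c * (x ^ 2 + y ^ 2) * binet c x y (2 * n + 2) - 2 * c * (x * y) ^ 2 * binet c x y (2 * n)
        - 2 * c ^ 2 * (x ^ 2 - y ^ 2) * (x * y) ^ (n + 1) := by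
  simp only [binet]; ring

end Binet

namespace PellBinet

variable {K : Type*} [Field K] [CharZero K] {R c l m : K}
  (hsum : l + m = R) (hprod : l * m = -R / 2) (hc : c * (l ^ 2 - m ^ 2) = 2)
include hsum hprod

theorem sq_add_sq : l ^ 2 + m ^ 2 = R ^ 2 + R := by
  subst hsum; linear_combination (-2) * hprod

theorem four_mul_binet_add_four (k : ℕ) :
    4 * binet c l m (k + 4) = 4 * R * (R + 1) * binet c l m (k + 2) - R ^ 2 * binet c l m k := by
  rw [binet_add_four, sq_add_sq hsum hprod, hprod]; ring

include hc

theorem sq_mul_cube_mul_add_two : c ^ 2 * (R ^ 3 * (R + 2)) = 4 := by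
  subst hsum
  linear_combination 4 * c ^ 2 * (l + m) ^ 2 * hprod + (c * (l ^ 2 - m ^ 2) + 2) * hc

theorem ne_zero_and_add_two_ne_zero : R ≠ 0 ∧ R + 2 ≠ 0 := by
  have h := sq_mul_cube_mul_add_two hsum hprod hc
  constructor <;> rintro h0 <;> simp [h0] at h

theorem binet_succ_sq (n : ℕ) :
    R ^ 2 * (R + 2) * binet c l m (n + 1) ^ 2 =
      2 * (R + 1) * binet c l m (2 * n + 2) - R * binet c l m (2 * n) + 4 * (-R / 2) ^ n := by
  have h := sq_sub_sq_mul_binet_succ_sq c l m n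
  rw [sq_add_sq hsum hprod, hprod] at h
  have h2 : 2 * binet c l m (n + 1) ^ 2 = c ^ 2 * ((R ^ 2 + R) * binet c l m (2 * n + 2)
      - 2 * (-R / 2) ^ 2 * binet c l m (2 * n) - 4 * (-R / 2) ^ (n + 1)) := by
    linear_combination c * h - (binet c l m (n + 1) ^ 2 + 2 * c ^ 2 * (-R / 2) ^ (n + 1)) * hc
  apply mul_left_cancel₀ (ne_zero_and_add_two_ne_zero hsum hprod hc).1
  linear_combination (R ^ 3 * (R + 2) / 2) * h2 + ((R ^ 2 + R) * binet c l m (2 * n + 2)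
    - 2 * (-R / 2) ^ 2 * binet c l m (2 * n) - 4 * (-R / 2) ^ (n + 1)) / 2
      * sq_mul_cube_mul_add_two hsum hprod hc

theorem sum_range_binet_sq (h32 : 3 * R - 2 ≠ 0) (n : ℕ) :
    ∑ k ∈ range (n + 1), binet c l m k ^ 2 =
      16 * (R - 2) / (R ^ 2 * (R + 2) ^ 2 * (3 * R - 2)) +
        (4 * binet c l m (2 * n + 2) + 2 * R * (R - 1) * binet c l m (2 * n)) /
          ((R + 2) * (3 * R - 2) * R ^ 2) -
        8 / (R ^ 2 * (R + 2) ^ 2) * (-R / 2) ^ n := by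
  obtain ⟨hR, hR2⟩ := ne_zero_and_add_two_ne_zero hsum hprod hc
  -- `field_simp` normalises `3 * R - 2` to `R * 3 - 2`
  have h32' : R * 3 - 2 ≠ 0 := by rwa [mul_comm]
  induction n with
  | zero =>
    have h2 : binet c l m 2 = 2 := hc
    simp only [zero_add, sum_range_one, binet_zero, mul_zero, h2]
    field_simp
    ring
  | succ n ih =>
    rw [sum_range_succ, ih, show 2 * (n + 1) + 2 = 2 * n + 4 by ring,
      show 2 * (n + 1) = 2 * n + 2 by ring, pow_succ]
    linear_combination (norm := skip) (1 / (R ^ 2 * (R + 2))) * binet_succ_sq hsum hprod hc n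
      - (1 / ((R + 2) * (3 * R - 2) * R ^ 2)) * four_mul_binet_add_four hsum hprod (c := c) (2 * n)
    field_simp
    ring

theorem mk_binet_even_div {d : K} (hd : d ≠ 0) :
    mk (fun n => (4 * binet c l m (2 * n + 2) + 2 * R * (R - 1) * binet c l m (2 * n)) / d) =
      C 16 * (-(X * C R) + X * C (R ^ 2) + 2) *
        (C d * (X ^ 2 * C (R ^ 2) - 4 * X * C (R * (R + 1)) + 4))⁻¹ := by
  have h2 : binet c l m 2 = 2 := hc
  have h4 : binet c l m 4 = 2 * R * (R + 1) := by
    have h := four_mul_binet_add_four hsum hprod (c := c) 0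
    rw [zero_add, zero_add, h2, binet_zero] at h
    linear_combination h / 4
  have hrec := four_mul_binet_add_four hsum hprod (c := c)
  have hmul := mk_mul_eq_of_recurrence_two
    (u := fun n => (4 * binet c l m (2 * n + 2) + 2 * R * (R - 1) * binet c l m (2 * n)) / d)
    (a := 4) (b := -(4 * R * (R + 1))) (c := R ^ 2) fun n => by
      rw [show 2 * (n + 2) + 2 = 2 * n + 2 + 4 by ring, show 2 * (n + 2) = 2 * n + 4 by ring,
        show 2 * (n + 1) + 2 = 2 * n + 4 by ring, show 2 * (n + 1) = 2 * n + 2 by ring]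
      linear_combination (4 * hrec (2 * n + 2) + 2 * R * (R - 1) * hrec (2 * n)) / d
  rw [eq_mul_inv_iff_mul_eq (by simp [hd, ← map_ofNat C]),
    show X ^ 2 * C (R ^ 2) - 4 * X * C (R * (R + 1)) + 4 =
      C 4 + C (-(4 * R * (R + 1))) * X + C (R ^ 2) * X ^ 2 by
        simp only [map_neg, map_mul, map_ofNat]; ring,
    mul_left_comm, hmul, mul_add, ← mul_assoc, ← map_mul, ← map_mul]
  simp only [h2, h4, binet_zero, mul_zero, add_zero, zero_add, mul_one]
  field_simp
  simp only [map_add, map_sub, map_mul, map_neg, map_pow, map_ofNat, map_one]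
  ring

theorem mk_sum_range_binet_sq (h32 : 3 * R - 2 ≠ 0) :
    mk (fun n => ∑ k ∈ range (n + 1), binet c l m k ^ 2) =
      C (16 * (R - 2)) * ((1 - X) * C (R ^ 2 * (R + 2) ^ 2 * (3 * R - 2)))⁻¹ +
        C 16 * (-(X * C R) + X * C (R ^ 2) + 2) *
          (C ((R + 2) * (3 * R - 2) * R ^ 2) *
            (X ^ 2 * C (R ^ 2) - 4 * X * C (R * (R + 1)) + 4))⁻¹ -
        C 16 * ((X * C R + 2) * C (R ^ 2 * (R + 2) ^ 2))⁻¹ := by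
  obtain ⟨hR, hR2⟩ := ne_zero_and_add_two_ne_zero hsum hprod hc
  rw [← mk_const_div (by positivity), ← mk_binet_even_div hsum hprod hc (by positivity),
    ← mk_div_mul_neg_div_two_pow (by positivity)]
  ext n
  simp only [map_add, map_sub, coeff_mk]
  exact sum_range_binet_sq hsum hprod hc h32 n

end PellBinet

open PowerSeries in
/-- Closed form for `∑_{k=0}^{n} P_R(k)²` and the corresponding generating function. -/
theorem PR_sum_of_squares (R : ℝ) (hR : 0 < R) (h32 : 3 * R - 2 ≠ 0) :
    (∀ n : ℕ, ∑ k ∈ Finset.range (n + 1), PR R k ^ 2 =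
        16 * (R - 2) / (R ^ 2 * (R + 2) ^ 2 * (3 * R - 2)) +
          (4 * PR R (2 * n + 2) + 2 * R * (R - 1) * PR R (2 * n)) /
            ((R + 2) * (3 * R - 2) * R ^ 2) -
          8 / (R ^ 2 * (R + 2) ^ 2) * (-R / 2) ^ n) ∧
      PowerSeries.mk (fun n => ∑ k ∈ Finset.range (n + 1), PR R k ^ 2) =
        C (R := ℝ) (16 * (R - 2)) * ((1 - X) * C (R := ℝ) (R ^ 2 * (R + 2) ^ 2 * (3 * R - 2)))⁻¹ +
          C (R := ℝ) 16 * (-(X * C (R := ℝ) R) + X * C (R := ℝ) (R ^ 2) + 2) *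
            (C (R := ℝ) ((R + 2) * (3 * R - 2) * R ^ 2) *
              (X ^ 2 * C (R := ℝ) (R ^ 2) - 4 * X * C (R := ℝ) (R * (R + 1)) + 4))⁻¹ -
          C (R := ℝ) 16 * ((X * C (R := ℝ) R + 2) * C (R := ℝ) (R ^ 2 * (R + 2) ^ 2))⁻¹ := by
  have hPR : PR R = binet (2 / (R * √(R ^ 2 + 2 * R)))
      ((R + √(R ^ 2 + 2 * R)) / 2) ((R - √(R ^ 2 + 2 * R)) / 2) := rfl
  rw [hPR]
  set W := √(R ^ 2 + 2 * R)
  have hW : W ^ 2 = R ^ 2 + 2 * R := Real.sq_sqrt (by positivity)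
  have hW0 : 0 < W := Real.sqrt_pos.2 (by positivity)
  have hsum : (R + W) / 2 + (R - W) / 2 = R := by ring
  have hprod : (R + W) / 2 * ((R - W) / 2) = -R / 2 := by linear_combination (-1 / 4) * hW
  have hc : 2 / (R * W) * (((R + W) / 2) ^ 2 - ((R - W) / 2) ^ 2) = 2 := by
    field_simp
    ring
  exact ⟨PellBinet.sum_range_binet_sq hsum hprod hc h32,
    PellBinet.mk_sum_range_binet_sq hsum hprod hc h32⟩
end
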